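/- arXiv:2204.09030 — 3 statements merged into one kernel-verified Lean document; each statement's English description precedes it below -/
import Mathlib

section
/- If flow variables f = {f_ij^{(q,s)} ≥ 0} satisfy the multicast flow conservation inequalities Σ_{s∈2^{q̄}} Σ_{j∈δ_i^−} f_{ji}^{(q+s,q)} + Σ_{s∈2^{q̄}} Σ_{j∈δ_i^+} f_{ij}^{(q+s,s)} + λ_i^{(q)} ≤ Σ_{s∈2^q} Σ_{j∈δ_i^+} f_{ij}^{(q,s)} for all nodes i and all q ∈ {0,1}^D, then for each fixed destination index k the aggregated unicast flows f̂_ij^{(k)} := (1/D)·Σ_{(q',s')∈S1(k)} f_ij^{(q',s')} satisfy the unicast flow conservation f̂_{→i}^{(k)} + λ_i/D ≤ f̂_{i→}^{(k)} at every node i, where S1(k) = {(q+s, q) : q_k = 1, s ∈ 2^{q̄}} and λ_i = λ_i^{(1)} is the rate of packets with full destination set. -/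
open Finset

lemma key_split {D : ℕ} (k : Fin D) (g : Finset (Fin D) → Finset (Fin D) → ℝ) :
    (∑ q ∈ Finset.univ.filter (fun q : Finset (Fin D) => k ∈ q),
        ∑ s ∈ qᶜ.powerset, g (q ∪ s) q)
      + (∑ q ∈ Finset.univ.filter (fun q : Finset (Fin D) => k ∈ q),
        ∑ s ∈ qᶜ.powerset, g (q ∪ s) s)
    = ∑ q ∈ Finset.univ.filter (fun q : Finset (Fin D) => k ∈ q),
        ∑ s ∈ q.powerset, g q s := by
  have h1 : (∑ q ∈ Finset.univ.filter (fun q : Finset (Fin D) => k ∈ q),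
        ∑ s ∈ qᶜ.powerset, g (q ∪ s) q)
      = ∑ q ∈ Finset.univ.filter (fun q : Finset (Fin D) => k ∈ q),
        ∑ s ∈ q.powerset.filter (fun s => k ∈ s), g q s := by
    rw [Finset.sum_sigma', Finset.sum_sigma']
    refine Finset.sum_nbij' (fun p => ⟨p.1 ∪ p.2, p.1⟩) (fun p => ⟨p.2, p.1 \ p.2⟩)
      ?_ ?_ ?_ ?_ ?_
    · rintro ⟨q, s⟩ hp
      simp only [Finset.mem_sigma, Finset.mem_filter, Finset.mem_univ, true_and,
        Finset.mem_powerset] at hp ⊢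
      exact ⟨Finset.mem_union_left _ hp.1, Finset.subset_union_left, hp.1⟩
    · rintro ⟨q, s⟩ hp
      simp only [Finset.mem_sigma, Finset.mem_filter, Finset.mem_univ, true_and,
        Finset.mem_powerset] at hp ⊢
      refine ⟨hp.2.2, fun x hx => ?_⟩
      simp only [Finset.mem_sdiff] at hx
      simp [hx.2]
    · rintro ⟨q, s⟩ hp
      simp only [Finset.mem_sigma, Finset.mem_filter, Finset.mem_univ, true_and,
        Finset.mem_powerset] at hp
      have hd : Disjoint q s := by
        rw [Finset.disjoint_left]
        intro x hx hxs
        have := hp.2 hxs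
        simp at this
        exact this hx
      simp only [Sigma.mk.inj_iff, heq_eq_eq]
      exact ⟨trivial, Finset.union_sdiff_cancel_left hd⟩
    · rintro ⟨q, s⟩ hp
      simp only [Finset.mem_sigma, Finset.mem_filter, Finset.mem_univ, true_and,
        Finset.mem_powerset] at hp
      simp only [Sigma.mk.inj_iff, heq_eq_eq]
      exact ⟨Finset.union_sdiff_of_subset hp.2.1, trivial⟩
    · rintro ⟨q, s⟩ _; rfl
  have h2 : (∑ q ∈ Finset.univ.filter (fun q : Finset (Fin D) => k ∈ q),
        ∑ s ∈ qᶜ.powerset, g (q ∪ s) s)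
      = ∑ q ∈ Finset.univ.filter (fun q : Finset (Fin D) => k ∈ q),
        ∑ s ∈ q.powerset.filter (fun s => k ∉ s), g q s := by
    rw [Finset.sum_sigma', Finset.sum_sigma']
    refine Finset.sum_nbij' (fun p => ⟨p.1 ∪ p.2, p.2⟩) (fun p => ⟨p.1 \ p.2, p.2⟩)
      ?_ ?_ ?_ ?_ ?_
    · rintro ⟨q, s⟩ hp
      simp only [Finset.mem_sigma, Finset.mem_filter, Finset.mem_univ, true_and,
        Finset.mem_powerset] at hp ⊢
      refine ⟨Finset.mem_union_left _ hp.1, Finset.subset_union_right, fun hks => ?_⟩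
      have := hp.2 hks
      simp at this
      exact this hp.1
    · rintro ⟨q, s⟩ hp
      simp only [Finset.mem_sigma, Finset.mem_filter, Finset.mem_univ, true_and,
        Finset.mem_powerset, Finset.mem_sdiff] at hp ⊢
      refine ⟨⟨hp.1, hp.2.2⟩, fun x hx => ?_⟩
      simp only [Finset.mem_compl, Finset.mem_sdiff, not_and, not_not]
      exact fun _ => hx
    · rintro ⟨q, s⟩ hp
      simp only [Finset.mem_sigma, Finset.mem_filter, Finset.mem_univ, true_and,
        Finset.mem_powerset] at hp
      have hd : Disjoint q s := by
        rw [Finset.disjoint_left]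
        intro x hx hxs
        have := hp.2 hxs
        simp at this
        exact this hx
      simp only [Sigma.mk.inj_iff, heq_eq_eq]
      exact ⟨Finset.union_sdiff_cancel_right hd, trivial⟩
    · rintro ⟨q, s⟩ hp
      simp only [Finset.mem_sigma, Finset.mem_filter, Finset.mem_univ, true_and,
        Finset.mem_powerset] at hp
      simp only [Sigma.mk.inj_iff, heq_eq_eq]
      exact ⟨Finset.sdiff_union_of_subset hp.2.1, trivial⟩
    · rintro ⟨q, s⟩ _; rfl
  rw [h1, h2, ← Finset.sum_add_distrib]
  refine Finset.sum_congr rfl fun q _ => ?_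
  exact Finset.sum_filter_add_sum_filter_not _ _ _

/-- If nonnegative multicast flows f satisfy the flow conservation inequalities
Σ_{s∈2^q̄} Σ_{j∈δ_i^−} f_{ji}^{(q+s,q)} + Σ_{s∈2^q̄} Σ_{j∈δ_i^+} f_{ij}^{(q+s,s)}
+ λ_i^{(q)} ≤ Σ_{s∈2^q} Σ_{j∈δ_i^+} f_{ij}^{(q,s)} for all nodes i and binary
vectors q, then for each destination index k the aggregated unicast flows
f̂_ij^{(k)} = (1/D)·Σ_{(q,s): k∈q, s⊆q̄} f_{ij}^{(q∪s,q)} satisfy the unicast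
conservation f̂_{→i}^{(k)} + λ_i/D ≤ f̂_{i→}^{(k)} at every node i. -/
theorem stmt11 (D : ℕ) (hD : 1 ≤ D) {V : Type} [Fintype V] [DecidableEq V]
    (inNbr outNbr : V → Finset V)
    (f : V → V → Finset (Fin D) → Finset (Fin D) → ℝ)
    (lam : V → ℝ) (hlam : ∀ i, 0 ≤ lam i)
    (hf : ∀ i j q s, 0 ≤ f i j q s)
    (hcons : ∀ (i : V) (q : Finset (Fin D)),
      (∑ s ∈ qᶜ.powerset, ∑ j ∈ inNbr i, f j i (q ∪ s) q) +
      (∑ s ∈ qᶜ.powerset, ∑ j ∈ outNbr i, f i j (q ∪ s) s) +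
      (if q = Finset.univ then lam i else 0) ≤
      ∑ s ∈ q.powerset, ∑ j ∈ outNbr i, f i j q s)
    (k : Fin D) :
    ∀ i : V,
      (∑ j ∈ inNbr i, (1 / (D : ℝ)) *
        ∑ q ∈ Finset.univ.filter (fun q : Finset (Fin D) => k ∈ q),
          ∑ s ∈ qᶜ.powerset, f j i (q ∪ s) q) + lam i / D ≤
      ∑ j ∈ outNbr i, (1 / (D : ℝ)) *
        ∑ q ∈ Finset.univ.filter (fun q : Finset (Fin D) => k ∈ q),
          ∑ s ∈ qᶜ.powerset, f i j (q ∪ s) q := by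
  intro i
  set Q := Finset.univ.filter (fun q : Finset (Fin D) => k ∈ q) with hQ
  -- sum the conservation inequality over q ∈ Q
  have hsum : (∑ q ∈ Q, ((∑ s ∈ qᶜ.powerset, ∑ j ∈ inNbr i, f j i (q ∪ s) q) +
      (∑ s ∈ qᶜ.powerset, ∑ j ∈ outNbr i, f i j (q ∪ s) s) +
      (if q = Finset.univ then lam i else 0))) ≤
      ∑ q ∈ Q, ∑ s ∈ q.powerset, ∑ j ∈ outNbr i, f i j q s :=
    Finset.sum_le_sum fun q _ => hcons i q
  rw [Finset.sum_add_distrib, Finset.sum_add_distrib] at hsum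
  have hite : (∑ q ∈ Q, (if q = Finset.univ then lam i else 0)) = lam i := by
    rw [Finset.sum_ite_eq' Q Finset.univ (fun _ => lam i)]
    simp [hQ]
  rw [hite] at hsum
  have hkey := key_split k (fun q s => ∑ j ∈ outNbr i, f i j q s)
  simp only [hQ] at hkey ⊢
  -- main inequality without the 1/D factor
  have hmain : (∑ q ∈ Q, ∑ s ∈ qᶜ.powerset, ∑ j ∈ inNbr i, f j i (q ∪ s) q) + lam i ≤
      ∑ q ∈ Q, ∑ s ∈ qᶜ.powerset, ∑ j ∈ outNbr i, f i j (q ∪ s) q := by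
    have := hsum
    rw [hQ] at this
    linarith [hkey]
  -- rearrange goal
  have hDpos : (0 : ℝ) < (D : ℝ) := by exact_mod_cast hD
  have hswap1 : (∑ j ∈ inNbr i, ∑ q ∈ Q, ∑ s ∈ qᶜ.powerset, f j i (q ∪ s) q)
      = ∑ q ∈ Q, ∑ s ∈ qᶜ.powerset, ∑ j ∈ inNbr i, f j i (q ∪ s) q := by
    rw [Finset.sum_comm]
    exact Finset.sum_congr rfl fun q _ => Finset.sum_comm
  have hswap2 : (∑ j ∈ outNbr i, ∑ q ∈ Q, ∑ s ∈ qᶜ.powerset, f i j (q ∪ s) q)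
      = ∑ q ∈ Q, ∑ s ∈ qᶜ.powerset, ∑ j ∈ outNbr i, f i j (q ∪ s) q := by
    rw [Finset.sum_comm]
    exact Finset.sum_congr rfl fun q _ => Finset.sum_comm
  rw [← hQ]
  calc (∑ j ∈ inNbr i, (1 / (D : ℝ)) * ∑ q ∈ Q, ∑ s ∈ qᶜ.powerset, f j i (q ∪ s) q)
        + lam i / D
      = (1 / (D : ℝ)) * ((∑ q ∈ Q, ∑ s ∈ qᶜ.powerset, ∑ j ∈ inNbr i, f j i (q ∪ s) q)
          + lam i) := by
        rw [← Finset.mul_sum, hswap1]; ring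
    _ ≤ (1 / (D : ℝ)) * (∑ q ∈ Q, ∑ s ∈ qᶜ.powerset, ∑ j ∈ outNbr i, f i j (q ∪ s) q) := by
        apply mul_le_mul_of_nonneg_left hmain (by positivity)
    _ = ∑ j ∈ outNbr i, (1 / (D : ℝ)) * ∑ q ∈ Q, ∑ s ∈ qᶜ.powerset, f i j (q ∪ s) q := by
        rw [← Finset.mul_sum, hswap2]
end

section
/- Counterexample to sufficiency of the aggregated flow conservation: with D = 3 destinations, the flow assignment at a node i with incoming rates f̆_{→i}^{(q)} = 1 for q = (1,1,1) and q = (1,0,0), outgoing rates f̆_{i→}^{(q)} = 1 for q = (1,1,0) and q = (1,0,1), and all other rates and arrivals zero, satisfies the aggregated conservation law Σ_{q:q_k=1}[f̆_{→i}^{(q)} + λ_i^{(q)}] = Σ_{q:q_k=1} f̆_{i→}^{(q)} for every k ∈ {1,2,3}, yet there exist no nonnegative per-choice flow variables f_ij^{(q,s)} satisfying the generalized flow conservation equalities (equation form of the per-status conservation law) that realize these aggregated rates. -/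
theorem double_reindex (g : Finset (Fin 3) → Finset (Fin 3) → ℝ) :
    ∑ q : Finset (Fin 3), ∑ s ∈ qᶜ.powerset, g (q ∪ s) s =
    ∑ q : Finset (Fin 3), ∑ s ∈ q.powerset, g q s := by
  rw [Finset.sum_sigma' Finset.univ, Finset.sum_sigma' Finset.univ]
  apply Finset.sum_nbij' (i := fun p => (⟨p.1 ∪ p.2, p.2⟩ : Σ _ : Finset (Fin 3), Finset (Fin 3)))
    (j := fun p => (⟨p.1 \ p.2, p.2⟩ : Σ _ : Finset (Fin 3), Finset (Fin 3)))
  · rintro ⟨a, b⟩ h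
    simp only [Finset.mem_sigma, Finset.mem_univ, Finset.mem_powerset] at *
    exact ⟨trivial, Finset.subset_union_right⟩
  · rintro ⟨a, b⟩ h
    simp only [Finset.mem_sigma, Finset.mem_univ, Finset.mem_powerset] at *
    refine ⟨trivial, fun x hx => ?_⟩
    simp [hx]
  · rintro ⟨a, b⟩ h
    simp only [Finset.mem_sigma, Finset.mem_univ, Finset.mem_powerset] at h
    have hd : Disjoint a b := by
      rw [Finset.disjoint_left]
      intro x hxa hxb
      have := h.2 hxb
      simp at this
      exact this hxa
    simp [Finset.union_sdiff_cancel_right hd]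
  · rintro ⟨a, b⟩ h
    simp only [Finset.mem_sigma, Finset.mem_univ, Finset.mem_powerset] at h
    simp [Finset.sdiff_union_of_subset h.2]
  · rintro ⟨a, b⟩ h; rfl

/-- Counterexample (D = 3): the aggregated per-destination conservation law
holds for the rates f̆_{→i}^{(q)} = 1 for q = (1,1,1), (1,0,0) and
f̆_{i→}^{(q)} = 1 for q = (1,1,0), (1,0,1) (all other rates and arrivals zero),
yet no nonnegative per-choice flows satisfying the generalized per-status flow
conservation equalities realize these aggregated rates. -/
theorem stmt14 :
    let breveIn : Finset (Fin 3) → ℝ := fun q =>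
      if q = (Finset.univ : Finset (Fin 3)) then 1 else if q = {0} then 1 else 0
    let breveOut : Finset (Fin 3) → ℝ := fun q =>
      if q = ({0, 1} : Finset (Fin 3)) then 1 else if q = {0, 2} then 1 else 0
    (∀ k : Fin 3,
      ∑ q ∈ Finset.univ.filter (fun q : Finset (Fin 3) => k ∈ q), breveIn q =
      ∑ q ∈ Finset.univ.filter (fun q : Finset (Fin 3) => k ∈ q), breveOut q) ∧
    ¬ ∃ fIn fOut : Finset (Fin 3) → Finset (Fin 3) → ℝ,
        (∀ q s, 0 ≤ fIn q s) ∧ (∀ q s, 0 ≤ fOut q s) ∧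
        (∀ q : Finset (Fin 3),
          breveIn q = ∑ s ∈ qᶜ.powerset, fIn (q ∪ s) q) ∧
        (∀ q : Finset (Fin 3),
          breveOut q = ∑ s ∈ qᶜ.powerset, fOut (q ∪ s) q) ∧
        (∀ q : Finset (Fin 3),
          (∑ s ∈ qᶜ.powerset, fIn (q ∪ s) q) +
          (∑ s ∈ qᶜ.powerset, fOut (q ∪ s) s) =
          ∑ s ∈ q.powerset, fOut q s) := by
  intro breveIn breveOut
  have hbI : ∀ (S : Finset (Finset (Fin 3))), ∑ q ∈ S, breveIn q =
      (if (Finset.univ : Finset (Fin 3)) ∈ S then (1:ℝ) else 0) +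
      (if ({0} : Finset (Fin 3)) ∈ S then 1 else 0) := by
    intro S
    have key : ∀ q, breveIn q =
        (if q = (Finset.univ : Finset (Fin 3)) then (1:ℝ) else 0) +
        (if q = {0} then 1 else 0) := by
      intro q
      simp only [breveIn]
      by_cases h1 : q = Finset.univ
      · subst h1
        rw [if_pos rfl, if_pos rfl, if_neg (by decide)]
        norm_num
      · simp [h1]
    rw [Finset.sum_congr rfl (fun q _ => key q), Finset.sum_add_distrib,
      Finset.sum_ite_eq' S, Finset.sum_ite_eq' S]
  have hbO : ∀ (S : Finset (Finset (Fin 3))), ∑ q ∈ S, breveOut q =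
      (if ({0, 1} : Finset (Fin 3)) ∈ S then (1:ℝ) else 0) +
      (if ({0, 2} : Finset (Fin 3)) ∈ S then 1 else 0) := by
    intro S
    have key : ∀ q, breveOut q =
        (if q = ({0, 1} : Finset (Fin 3)) then (1:ℝ) else 0) +
        (if q = {0, 2} then 1 else 0) := by
      intro q
      simp only [breveOut]
      by_cases h1 : q = ({0, 1} : Finset (Fin 3))
      · subst h1
        rw [if_pos rfl, if_pos rfl, if_neg (by decide)]
        norm_num
      · simp [h1]
    rw [Finset.sum_congr rfl (fun q _ => key q), Finset.sum_add_distrib,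
      Finset.sum_ite_eq' S, Finset.sum_ite_eq' S]
  constructor
  · intro k
    rw [hbI, hbO]
    fin_cases k <;> norm_num [Finset.mem_filter, Fin.ext_iff]
  · rintro ⟨fIn, fOut, _, _, h3, _, h5⟩
    have hsum : ∑ q : Finset (Fin 3),
        ((∑ s ∈ qᶜ.powerset, fIn (q ∪ s) q) + ∑ s ∈ qᶜ.powerset, fOut (q ∪ s) s) =
        ∑ q : Finset (Fin 3), ∑ s ∈ q.powerset, fOut q s :=
      Finset.sum_congr rfl (fun q _ => h5 q)
    rw [Finset.sum_add_distrib, double_reindex fOut] at hsum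
    have h2 : ∑ q : Finset (Fin 3), ∑ s ∈ qᶜ.powerset, fIn (q ∪ s) q =
        ∑ q : Finset (Fin 3), breveIn q :=
      Finset.sum_congr rfl (fun q _ => (h3 q).symm)
    rw [h2, hbI] at hsum
    simp only [Finset.mem_univ, if_true] at hsum
    linarith
end

section
/- The generalized per-status flow conservation implies the aggregated per-destination conservation: if nonnegative flows f_ij^{(q,s)} satisfy, for every node i and every q ∈ {0,1}^D, the equality Σ_{s∈2^{q̄}} Σ_{j∈δ_i^−} f_{ji}^{(q+s,q)} + Σ_{s∈2^{q̄}} Σ_{j∈δ_i^+} f_{ij}^{(q+s,s)} + λ_i^{(q)} = Σ_{s∈2^q} Σ_{j∈δ_i^+} f_{ij}^{(q,s)}, then for each destination index k, Σ_{q:q_k=1}[f̆_{→i}^{(q)} + λ_i^{(q)}] = Σ_{q:q_k=1} f̆_{i→}^{(q)}, where f̆_{→i}^{(q)} = Σ_{s∈2^{q̄}} Σ_{j∈δ_i^−} f_{ji}^{(q+s,q)} and f̆_{i→}^{(q)} = Σ_{s∈2^{q̄}} Σ_{j∈δ_i^+} f_{ij}^{(q+s,q)}. -/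
lemma split_sum15 {D : ℕ} (k : Fin D) (g : Finset (Fin D) → Finset (Fin D) → ℝ) :
    ∑ q ∈ Finset.univ.filter (fun q : Finset (Fin D) => k ∈ q), ∑ s ∈ q.powerset, g q s
    = (∑ q ∈ Finset.univ.filter (fun q : Finset (Fin D) => k ∈ q),
        ∑ s ∈ qᶜ.powerset, g (q ∪ s) s)
    + (∑ q ∈ Finset.univ.filter (fun q : Finset (Fin D) => k ∈ q),
        ∑ s ∈ qᶜ.powerset, g (q ∪ s) q) := by
  classical
  rw [Finset.sum_sigma', Finset.sum_sigma', Finset.sum_sigma']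
  rw [← Finset.sum_filter_add_sum_filter_not _ (fun p => k ∉ p.2)]
  congr 1
  · apply Finset.sum_nbij' (i := fun p => (⟨p.1 \ p.2, p.2⟩ : Σ _ : Finset (Fin D), Finset (Fin D)))
      (j := fun p => ⟨p.1 ∪ p.2, p.2⟩)
    · rintro ⟨Q, t⟩ hp
      simp only [Finset.mem_filter, Finset.mem_sigma, Finset.mem_powerset,
        Finset.mem_univ, true_and] at hp ⊢
      obtain ⟨⟨hkQ, htQ⟩, hkt⟩ := hp
      refine ⟨Finset.mem_sdiff.mpr ⟨hkQ, hkt⟩, ?_⟩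
      intro x hx
      simp only [Finset.mem_compl, Finset.mem_sdiff, not_and, not_not]
      exact fun _ => hx
    · rintro ⟨q, s⟩ hp
      simp only [Finset.mem_filter, Finset.mem_sigma, Finset.mem_powerset,
        Finset.mem_univ, true_and] at hp ⊢
      obtain ⟨hkq, hsq⟩ := hp
      have hks : k ∉ s := fun h => by
        have := hsq h; exact (Finset.mem_compl.mp this) hkq
      exact ⟨⟨Finset.mem_union_left _ hkq, Finset.subset_union_right⟩, hks⟩
    · rintro ⟨Q, t⟩ hp
      simp only [Finset.mem_filter, Finset.mem_sigma, Finset.mem_powerset,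
        Finset.mem_univ, true_and] at hp
      obtain ⟨⟨hkQ, htQ⟩, hkt⟩ := hp
      simp [Finset.sdiff_union_of_subset htQ]
    · rintro ⟨q, s⟩ hp
      simp only [Finset.mem_filter, Finset.mem_sigma, Finset.mem_powerset,
        Finset.mem_univ, true_and] at hp
      obtain ⟨hkq, hsq⟩ := hp
      have : Disjoint q s := Finset.disjoint_left.mpr (fun x hxq hxs =>
        (Finset.mem_compl.mp (hsq hxs)) hxq)
      simp [Finset.union_sdiff_cancel_right this]
    · rintro ⟨Q, t⟩ hp
      simp only [Finset.mem_filter, Finset.mem_sigma, Finset.mem_powerset,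
        Finset.mem_univ, true_and] at hp
      obtain ⟨⟨hkQ, htQ⟩, hkt⟩ := hp
      simp [Finset.sdiff_union_of_subset htQ]
  · apply Finset.sum_nbij' (i := fun p => (⟨p.2, p.1 \ p.2⟩ : Σ _ : Finset (Fin D), Finset (Fin D)))
      (j := fun p => ⟨p.1 ∪ p.2, p.1⟩)
    · rintro ⟨Q, t⟩ hp
      simp only [Finset.mem_filter, Finset.mem_sigma, Finset.mem_powerset,
        Finset.mem_univ, true_and, not_not] at hp ⊢
      obtain ⟨⟨hkQ, htQ⟩, hkt⟩ := hp
      refine ⟨hkt, ?_⟩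
      intro x hx
      simp only [Finset.mem_compl]
      exact (Finset.mem_sdiff.mp hx).2
    · rintro ⟨q, s⟩ hp
      simp only [Finset.mem_filter, Finset.mem_sigma, Finset.mem_powerset,
        Finset.mem_univ, true_and, not_not] at hp ⊢
      obtain ⟨hkq, hsq⟩ := hp
      exact ⟨⟨Finset.mem_union_left _ hkq, Finset.subset_union_left⟩, hkq⟩
    · rintro ⟨Q, t⟩ hp
      simp only [Finset.mem_filter, Finset.mem_sigma, Finset.mem_powerset,
        Finset.mem_univ, true_and, not_not] at hp
      obtain ⟨⟨hkQ, htQ⟩, hkt⟩ := hp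
      simp [Finset.union_sdiff_of_subset htQ]
    · rintro ⟨q, s⟩ hp
      simp only [Finset.mem_filter, Finset.mem_sigma, Finset.mem_powerset,
        Finset.mem_univ, true_and, not_not] at hp
      obtain ⟨hkq, hsq⟩ := hp
      have : Disjoint q s := Finset.disjoint_left.mpr (fun x hxq hxs =>
        (Finset.mem_compl.mp (hsq hxs)) hxq)
      simp [Finset.union_sdiff_cancel_left this]
    · rintro ⟨Q, t⟩ hp
      simp only [Finset.mem_filter, Finset.mem_sigma, Finset.mem_powerset,
        Finset.mem_univ, true_and, not_not] at hp
      obtain ⟨⟨hkQ, htQ⟩, hkt⟩ := hp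
      simp [Finset.union_sdiff_of_subset htQ]

/-- The generalized per-status flow conservation equalities imply the
aggregated per-destination conservation law: for each destination index k,
Σ_{q : q_k = 1} [f̆_{→i}^{(q)} + λ_i^{(q)}] = Σ_{q : q_k = 1} f̆_{i→}^{(q)},
where f̆_{→i}^{(q)} = Σ_{s∈2^q̄} Σ_{j∈δ_i^−} f_{ji}^{(q+s,q)} and
f̆_{i→}^{(q)} = Σ_{s∈2^q̄} Σ_{j∈δ_i^+} f_{ij}^{(q+s,q)}. -/
theorem stmt15 (D : ℕ) (hD : 1 ≤ D) {V : Type} [Fintype V] [DecidableEq V]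
    (inNbr outNbr : V → Finset V)
    (f : V → V → Finset (Fin D) → Finset (Fin D) → ℝ)
    (lam : Finset (Fin D) → V → ℝ) (hlam : ∀ q i, 0 ≤ lam q i)
    (hf : ∀ i j q s, 0 ≤ f i j q s)
    (hcons : ∀ (i : V) (q : Finset (Fin D)),
      (∑ s ∈ qᶜ.powerset, ∑ j ∈ inNbr i, f j i (q ∪ s) q) +
      (∑ s ∈ qᶜ.powerset, ∑ j ∈ outNbr i, f i j (q ∪ s) s) +
      lam q i =
      ∑ s ∈ q.powerset, ∑ j ∈ outNbr i, f i j q s) :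
    ∀ (k : Fin D) (i : V),
      ∑ q ∈ Finset.univ.filter (fun q : Finset (Fin D) => k ∈ q),
        ((∑ s ∈ qᶜ.powerset, ∑ j ∈ inNbr i, f j i (q ∪ s) q) + lam q i) =
      ∑ q ∈ Finset.univ.filter (fun q : Finset (Fin D) => k ∈ q),
        (∑ s ∈ qᶜ.powerset, ∑ j ∈ outNbr i, f i j (q ∪ s) q) := by
  intro k i
  have key := split_sum15 k (fun q s => ∑ j ∈ outNbr i, f i j q s)
  have hsum := Finset.sum_congr rfl (fun q (_ : q ∈ Finset.univ.filter
    (fun q : Finset (Fin D) => k ∈ q)) => hcons i q)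
  simp only [Finset.sum_add_distrib] at hsum ⊢
  linarith
end
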